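/- arXiv:2404.07709 — 2 statements merged into one kernel-verified Lean document; each statement's English description precedes it below -/
import Mathlib

section
/- Let E be a finite-dimensional real inner product space, X : E → ℝᴺ a linear map, y ∈ ℝᴺ, and λ > 0. Then the function f ↦ ‖X f − y‖₂² + λ‖f‖² has a unique minimizer over E, given explicitly by f̂ = Xᵀ (X Xᵀ + λ Iₙ)⁻¹ y, where Xᵀ denotes the adjoint of X. -/
set_option maxHeartbeats 1000000

open RealInnerProductSpace

theorem stmt_1 {E : Type*} [NormedAddCommGroup E] [InnerProductSpace ℝ E]
    [FiniteDimensional ℝ E] (N : ℕ)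
    (X : E →ₗ[ℝ] EuclideanSpace ℝ (Fin N)) (y : EuclideanSpace ℝ (Fin N))
    (lam : ℝ) (hlam : 0 < lam)
    (A : EuclideanSpace ℝ (Fin N) →ₗ[ℝ] EuclideanSpace ℝ (Fin N))
    (hA : A = X ∘ₗ LinearMap.adjoint X + lam • LinearMap.id) :
    Function.Bijective A ∧
    ∀ f : E,
      (∀ g : E, ‖X f - y‖ ^ 2 + lam * ‖f‖ ^ 2 ≤ ‖X g - y‖ ^ 2 + lam * ‖g‖ ^ 2) ↔
        f = LinearMap.adjoint X (Function.invFun A y) := by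
  -- A is injective
  have hinj : Function.Injective A := by
    rw [← LinearMap.ker_eq_bot, LinearMap.ker_eq_bot']
    intro v hv
    have h1 : ⟪A v, v⟫ = 0 := by rw [hv]; simp
    have h2 : ⟪A v, v⟫ = ‖LinearMap.adjoint X v‖ ^ 2 + lam * ‖v‖ ^ 2 := by
      rw [hA]
      simp only [LinearMap.add_apply, LinearMap.comp_apply, LinearMap.smul_apply,
        LinearMap.id_apply, inner_add_left, inner_smul_left]
      rw [real_inner_self_eq_norm_sq, ← LinearMap.adjoint_inner_right,
        real_inner_self_eq_norm_sq]
      norm_num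
    have h3 : lam * ‖v‖ ^ 2 ≤ 0 := by nlinarith [sq_nonneg ‖LinearMap.adjoint X v‖]
    have h4 : ‖v‖ ^ 2 ≤ 0 := by
      by_contra h
      push_neg at h
      nlinarith [mul_pos hlam h]
    have : ‖v‖ = 0 := by nlinarith [norm_nonneg v, sq_nonneg ‖v‖]
    exact norm_eq_zero.mp this
  have hbij : Function.Bijective A :=
    ⟨hinj, (LinearMap.injective_iff_surjective).mp hinj⟩
  refine ⟨hbij, ?_⟩
  set u := Function.invFun A y with hu
  have hAu : A u = y := Function.rightInverse_invFun hbij.surjective y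
  set f0 := LinearMap.adjoint X u with hf0
  -- stationarity: adjoint X (X f0 - y) + lam • f0 = 0
  have hstat : LinearMap.adjoint X (X f0 - y) + lam • f0 = 0 := by
    have : X f0 - y + lam • u = A u - y := by
      rw [hA]; simp [f0]; abel
    rw [show lam • f0 = LinearMap.adjoint X (lam • u) by simp [f0],
      ← map_add, this, hAu]
    simp
  -- cross term vanishes
  have hcross : ∀ h : E, ⟪X f0 - y, X h⟫ + lam * ⟪f0, h⟫ = 0 := by
    intro h
    have : ⟪LinearMap.adjoint X (X f0 - y) + lam • f0, h⟫ = 0 := by rw [hstat]; simp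
    rw [inner_add_left, inner_smul_left, LinearMap.adjoint_inner_left] at this
    simpa using this
  -- expansion
  have hexp : ∀ g : E, ‖X g - y‖ ^ 2 + lam * ‖g‖ ^ 2 =
      (‖X f0 - y‖ ^ 2 + lam * ‖f0‖ ^ 2) + (‖X (g - f0)‖ ^ 2 + lam * ‖g - f0‖ ^ 2) := by
    intro g
    have e1 : X g - y = (X f0 - y) + X (g - f0) := by rw [map_sub]; abel
    have e2 : g = f0 + (g - f0) := by abel
    rw [e1, norm_add_sq_real, (by rw [← e2] : ‖f0 + (g - f0)‖ = ‖g‖).symm,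
      norm_add_sq_real]
    have := hcross (g - f0)
    nlinarith [this]
  intro f
  constructor
  · intro hmin
    have h1 := hmin f0
    have h2 := hexp f
    have h3 : lam * ‖f - f0‖ ^ 2 ≤ 0 := by nlinarith [sq_nonneg ‖X (f - f0)‖]
    have h3' : ‖f - f0‖ ^ 2 ≤ 0 := by
      by_contra h
      push_neg at h
      nlinarith [mul_pos hlam h]
    have h4 : ‖f - f0‖ ^ 2 = 0 := le_antisymm h3' (sq_nonneg _)
    have h5 : f - f0 = 0 := by
      rw [pow_eq_zero_iff (two_ne_zero), norm_eq_zero] at h4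
      exact h4
    rwa [sub_eq_zero] at h5
  · intro hf g
    rw [hf]
    have := hexp g
    nlinarith [sq_nonneg ‖X (g - f0)‖, sq_nonneg ‖g - f0‖]
end

section
/- Let η₁, …, η_p be nonnegative random variables (not necessarily independent), and t₁, …, t_p nonnegative real numbers, at least one of which is strictly positive. Suppose that for some 0 < δ < 1 and each i ≤ p, P(ηᵢ > tᵢ) ≥ 1 − δ. Then P( Σᵢ ηᵢ ≥ (1/2) Σᵢ tᵢ ) ≥ 1 − 2δ. -/
/-! Let `g = ∑ᵢ tᵢ · 1{ηᵢ ≤ tᵢ}`. Then `𝔼 g ≤ δ ∑ᵢ tᵢ`, so by Markov's inequality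
`g ≥ (1/2) ∑ᵢ tᵢ` has probability at most `2δ`; off that event
`∑ᵢ ηᵢ ≥ ∑ᵢ tᵢ 1{ηᵢ > tᵢ} = ∑ᵢ tᵢ - g > (1/2) ∑ᵢ tᵢ`. -/

open MeasureTheory Finset

section

variable {Ω ι : Type*} [MeasurableSpace Ω] [Fintype ι]

lemma sum_le_sum_add_sum_ite_of_nonneg {η t : ι → ℝ} (hη : ∀ i, 0 ≤ η i) :
    ∑ i, t i ≤ ∑ i, η i + ∑ i, if η i ≤ t i then t i else 0 := by
  rw [← sum_add_distrib]
  gcongr with i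
  split_ifs with h
  · linarith [hη i]
  · linarith [not_le.mp h]

lemma mul_measureReal_le_sum_indicator_ge (μ : Measure Ω) [IsFiniteMeasure μ]
    {s : ι → Set Ω} (hs : ∀ i, MeasurableSet (s i)) {w : ι → ℝ} (hw : ∀ i, 0 ≤ w i) (ε : ℝ) :
    ε * μ.real {ω | ε ≤ ∑ i, (s i).indicator (fun _ => w i) ω} ≤ ∑ i, w i * μ.real (s i) := by
  have hint : ∀ i, Integrable ((s i).indicator fun _ => w i) μ :=
    fun i => (integrable_const (w i)).indicator (hs i)
  have hnonneg : 0 ≤ᵐ[μ] fun ω => ∑ i, (s i).indicator (fun _ => w i) ω :=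
    Filter.Eventually.of_forall fun ω =>
      sum_nonneg fun i _ => Set.indicator_nonneg (fun _ _ => hw i) ω
  calc _ ≤ ∫ ω, ∑ i, (s i).indicator (fun _ => w i) ω ∂μ :=
        mul_meas_ge_le_integral_of_nonneg hnonneg (integrable_finsetSum _ fun i _ => hint i) ε
    _ = ∑ i, w i * μ.real (s i) := by
        rw [integral_finsetSum _ fun i _ => hint i]
        simp [integral_indicator_const _ (hs _), mul_comm]

theorem one_sub_two_mul_le_measureReal_half_sum_le_sum (μ : Measure Ω) [IsProbabilityMeasure μ]
    {η : ι → Ω → ℝ} (hη : ∀ i, Measurable (η i)) (hη0 : ∀ i ω, 0 ≤ η i ω)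
    {t : ι → ℝ} (ht : ∀ i, 0 ≤ t i) (hS : 0 < ∑ i, t i) {δ : ℝ}
    (hP : ∀ i, 1 - δ ≤ μ.real {ω | t i < η i ω}) :
    1 - 2 * δ ≤ μ.real {ω | (1/2) * ∑ i, t i ≤ ∑ i, η i ω} := by
  set S := ∑ i, t i
  set s : ι → Set Ω := fun i => {ω | η i ω ≤ t i}
  have hs : ∀ i, MeasurableSet (s i) := fun i => measurableSet_le (hη i) measurable_const
  have hsmall : ∀ i, μ.real (s i) ≤ δ := fun i => by
    have hcompl : s i = {ω | t i < η i ω}ᶜ := by ext; simp [s]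
    rw [hcompl, probReal_compl_eq_one_sub (measurableSet_lt measurable_const (hη i))]
    linarith [hP i]
  set bad := {ω | S / 2 ≤ ∑ i, (s i).indicator (fun _ => t i) ω}
  have hbad : μ.real bad ≤ 2 * δ := by
    have hmarkov : S / 2 * μ.real bad ≤ S / 2 * (2 * δ) :=
      calc S / 2 * μ.real bad ≤ ∑ i, t i * μ.real (s i) :=
            mul_measureReal_le_sum_indicator_ge μ hs ht _
        _ ≤ ∑ i, t i * δ := by gcongr with i; exacts [ht i, hsmall i]
        _ = S / 2 * (2 * δ) := by rw [← sum_mul]; ring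
    exact le_of_mul_le_mul_left hmarkov (by positivity)
  have hcover : Set.univ ⊆ {ω | (1/2) * S ≤ ∑ i, η i ω} ∪ bad := by
    intro ω _
    by_contra hω
    simp only [Set.mem_union, Set.mem_ofPred_eq, not_or, not_le, bad, s, Set.indicator_apply]
      at hω
    linarith [sum_le_sum_add_sum_ite_of_nonneg (t := t) fun i => hη0 i ω]
  calc 1 - 2 * δ ≤ μ.real Set.univ - μ.real bad := by rw [probReal_univ]; linarith
    _ ≤ μ.real {ω | (1/2) * S ≤ ∑ i, η i ω} := by
        linarith [measureReal_mono (μ := μ) hcover, measureReal_union_le (μ := μ)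
          {ω | (1/2) * S ≤ ∑ i, η i ω} bad]

end

theorem stmt_4_general {Ω : Type*} [MeasurableSpace Ω] (μ : Measure Ω) [IsProbabilityMeasure μ]
    (p : ℕ) (η : Fin p → Ω → ℝ) (hmeas : ∀ i, Measurable (η i))
    (hnonneg : ∀ i ω, 0 ≤ η i ω) (t : Fin p → ℝ) (ht : ∀ i, 0 ≤ t i)
    (htpos : ∃ i, 0 < t i) (δ : ℝ)
    (hP : ∀ i, ENNReal.ofReal (1 - δ) ≤ μ {ω | t i < η i ω}) :
    ENNReal.ofReal (1 - 2 * δ) ≤ μ {ω | (1/2) * ∑ i, t i ≤ ∑ i, η i ω} := by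
  obtain ⟨j, hj⟩ := htpos
  have hS : 0 < ∑ i, t i := sum_pos' (fun i _ => ht i) ⟨j, mem_univ j, hj⟩
  have hP' : ∀ i, 1 - δ ≤ μ.real {ω | t i < η i ω} := fun i =>
    (ENNReal.ofReal_le_iff_le_toReal (measure_ne_top μ _)).1 (hP i)
  exact ENNReal.ofReal_le_of_le_toReal
    (one_sub_two_mul_le_measureReal_half_sum_le_sum μ hmeas hnonneg ht hS hP')

theorem stmt_4 {Ω : Type*} [MeasurableSpace Ω] (μ : Measure Ω) [IsProbabilityMeasure μ]
    (p : ℕ) (η : Fin p → Ω → ℝ) (hmeas : ∀ i, Measurable (η i))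
    (hnonneg : ∀ i ω, 0 ≤ η i ω) (t : Fin p → ℝ) (ht : ∀ i, 0 ≤ t i)
    (htpos : ∃ i, 0 < t i) (δ : ℝ) (hδ0 : 0 < δ) (hδ1 : δ < 1)
    (hP : ∀ i, ENNReal.ofReal (1 - δ) ≤ μ {ω | t i < η i ω}) :
    ENNReal.ofReal (1 - 2 * δ) ≤ μ {ω | (1/2) * ∑ i, t i ≤ ∑ i, η i ω} :=
  stmt_4_general μ p η hmeas hnonneg t ht htpos δ hP
end
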